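/- Distinct faces of a discrete plane have disjoint images under a generalized substitution: if [x,i]* and [x',i']* are distinct faces of the discrete plane P_v (v with positive coordinates), then the sets of faces E₁*(σ)([x,i]*) and E₁*(σ)([x',i']*) are disjoint, where σ is a unimodular substitution with incidence matrix M and Mᵀv has positive coordinates. -/

import Mathlib

abbrev Face := (Fin 3 → ℤ) × Fin 3

def abel (s : List (Fin 3)) : Fin 3 → ℤ := fun i => s.count i

def incidence (σ : Fin 3 → List (Fin 3)) : Matrix (Fin 3) (Fin 3) ℤ :=
  fun i j => (σ j).count i

def E1star (σ : Fin 3 → List (Fin 3)) (f : Face) : Set Face :=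
  { g | ∃ (j : Fin 3) (p s : List (Fin 3)),
      σ j = p ++ f.2 :: s ∧ g = ((incidence σ)⁻¹.mulVec (f.1 + abel s), j) }

open Finset in
def dotIR (x : Fin 3 → ℤ) (v : Fin 3 → ℝ) : ℝ := ∑ k, (x k : ℝ) * v k

def discretePlane (v : Fin 3 → ℝ) : Set Face :=
  { f | 0 ≤ dotIR f.1 v ∧ dotIR f.1 v < v f.2 }

/-! Two faces with a common image come from two occurrences of letters in the same word `σ j`.
If it is the same occurrence, the faces coincide. Otherwise one occurrence, say of `i'` for the
face `(x', i')`, lies strictly after that of `i` for `(x, i)`, say `σ j = p ++ i :: q ++ i' :: t`;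
then `x' = x + ℓ(q) + e_{i'}`, so `⟨x', v⟩ ≥ ⟨x, v⟩ + v_{i'} ≥ v_{i'}` and `(x', i')` is not in
the discrete plane. -/

theorem List.append_cons_eq_append_cons_cases {α : Type*} :
    ∀ {p s p' s' : List α} {a a' : α}, p ++ a :: s = p' ++ a' :: s' →
      (a = a' ∧ s = s') ∨ (∃ q, s = q ++ a' :: s') ∨ (∃ q, s' = q ++ a :: s)
  | [], _, [], _, _, _, h => by simp_all
  | [], _, _ :: q, _, _, _, h => Or.inr (Or.inl ⟨q, (List.cons.inj h).2⟩)
  | _ :: q, _, [], _, _, _, h => Or.inr (Or.inr ⟨q, (List.cons.inj h).2.symm⟩)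
  | _ :: _, _, _ :: _, _, _, _, h => append_cons_eq_append_cons_cases (List.cons.inj h).2

theorem abel_append (q r : List (Fin 3)) : abel (q ++ r) = abel q + abel r := by
  funext k
  simp [abel, List.count_append]

theorem abel_cons (i : Fin 3) (t : List (Fin 3)) : abel (i :: t) = Pi.single i 1 + abel t := by
  funext k
  by_cases hk : k = i
  · subst hk
    simp [abel, add_comm]
  · simp [abel, hk, Ne.symm hk]

theorem dotIR_add (x y : Fin 3 → ℤ) (v : Fin 3 → ℝ) :
    dotIR (x + y) v = dotIR x v + dotIR y v := by
  simp [dotIR, add_mul, Finset.sum_add_distrib]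

theorem dotIR_single_one (i : Fin 3) (v : Fin 3 → ℝ) : dotIR (Pi.single i 1) v = v i := by
  simp [dotIR, Pi.single_apply]

theorem dotIR_abel_nonneg {v : Fin 3 → ℝ} (hv : ∀ k, 0 ≤ v k) (s : List (Fin 3)) :
    0 ≤ dotIR (abel s) v :=
  Finset.sum_nonneg fun k _ => mul_nonneg (by simp [abel]) (hv k)

theorem dotIR_add_le_of_add_abel_eq {v : Fin 3 → ℝ} (hv : ∀ k, 0 ≤ v k)
    {x y : Fin 3 → ℤ} {i : Fin 3} {q t : List (Fin 3)}
    (h : x + abel (q ++ i :: t) = y + abel t) : dotIR x v + v i ≤ dotIR y v := by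
  have hy : y = x + abel q + Pi.single i 1 := by
    rw [abel_append, abel_cons] at h
    refine add_right_cancel (b := abel t) (h.symm.trans ?_)
    abel
  rw [hy, dotIR_add, dotIR_add, dotIR_single_one]
  linarith [dotIR_abel_nonneg hv q]

open Finset in
theorem E1star_disjoint_on_discretePlane_general (σ : Fin 3 → List (Fin 3))
    (hσ : IsUnit (incidence σ).det)
    (v : Fin 3 → ℝ) (hv : ∀ k, 0 < v k)
    (f f' : Face) (hf : f ∈ discretePlane v) (hf' : f' ∈ discretePlane v)
    (hne : f ≠ f') :
    Disjoint (E1star σ f) (E1star σ f') := by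
  have hinj : Function.Injective (incidence σ)⁻¹.mulVec :=
    Matrix.mulVec_injective_of_isUnit
      ((Matrix.isUnit_iff_isUnit_det _).2 (Matrix.isUnit_nonsing_inv_det _ hσ))
  have hv₀ : ∀ k, 0 ≤ v k := fun k => (hv k).le
  rw [Set.disjoint_left]
  rintro g ⟨j, p, s, hσj, rfl⟩ ⟨j', p', s', hσj', hg⟩
  obtain ⟨hx, rfl⟩ := Prod.ext_iff.1 hg
  have hsum : f.1 + abel s = f'.1 + abel s' := hinj hx
  rcases List.append_cons_eq_append_cons_cases (hσj.symm.trans hσj') with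
    ⟨hi, rfl⟩ | ⟨q, rfl⟩ | ⟨q, rfl⟩
  · exact hne (Prod.ext (add_right_cancel hsum) hi)
  · linarith [hf.1, hf'.2, dotIR_add_le_of_add_abel_eq hv₀ hsum]
  · linarith [hf'.1, hf.2, dotIR_add_le_of_add_abel_eq hv₀ hsum.symm]

open Finset in
/-- Distinct faces of a discrete plane have disjoint images under a generalized
substitution. -/
theorem E1star_disjoint_on_discretePlane (σ : Fin 3 → List (Fin 3))
    (hσ : IsUnit (incidence σ).det)
    (v : Fin 3 → ℝ) (hv : ∀ k, 0 < v k)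
    (hMv : ∀ i, 0 < ∑ k, ((incidence σ) k i : ℝ) * v k)
    (f f' : Face) (hf : f ∈ discretePlane v) (hf' : f' ∈ discretePlane v)
    (hne : f ≠ f') :
    Disjoint (E1star σ f) (E1star σ f') :=
  E1star_disjoint_on_discretePlane_general σ hσ v hv f f' hf hf' hne
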